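/- For every real number α ≥ 1 there exist a finite probability space and random variables R₁, R₂ taking finitely many values in [0,1] such that E[min(R₁, R₂)] > 0 and, for every function d : ℝ → [0,1] (the probability of stopping after observing R₁), the expected cost of the corresponding no-recall stopping rule satisfies E[ d(R₁)·R₁ + (1 − d(R₁))·R₂ ] > α · E[min(R₁, R₂)]. In particular, no no-recall algorithm achieves a bounded α-approximation to the offline optimal expected cost, even with n = 2 stages and bounded distributions. -/

import Mathlib

open MeasureTheory

/-- Integral of any function on `Bool` against a weighted sum of Dirac measures. -/
lemma integral_bool_two_point (a b : ℝ) (ha : 0 ≤ a) (hb : 0 ≤ b) (f : Bool → ℝ) :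
    ∫ x, f x ∂(ENNReal.ofReal a • Measure.dirac true + ENNReal.ofReal b • Measure.dirac false)
      = a * f true + b * f false := by
  rw [integral_add_measure]
  · rw [integral_smul_measure, integral_smul_measure, integral_dirac, integral_dirac,
      ENNReal.toReal_ofReal ha, ENNReal.toReal_ofReal hb]
    simp [smul_eq_mul]
  · exact Integrable.of_finite.smul_measure (by simp)
  · exact Integrable.of_finite.smul_measure (by simp)

/-- **Theorem 3.1 (Impossibility of Constant Approximation, No-Recall Costly
Exploration).**  For every `α ≥ 1` there is a finite probability space and random
variables `R₁, R₂` taking values in `[0,1]` with `E[min(R₁,R₂)] > 0` such that every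
(possibly randomized) no-recall stopping rule `d : ℝ → [0,1]` has expected cost
`E[d(R₁)·R₁ + (1 - d(R₁))·R₂] > α · E[min(R₁,R₂)]`; i.e., no no-recall algorithm
achieves a bounded `α`-approximation to the offline optimum, even with `n = 2`
stages and bounded distributions. -/
theorem no_recall_no_constant_approximation
    (α : ℝ) (hα : 1 ≤ α) :
    ∃ (Ω : Type) (_ : MeasurableSpace Ω) (_ : Fintype Ω) (μ : Measure Ω),
      IsProbabilityMeasure μ ∧
      ∃ R₁ R₂ : Ω → ℝ,
        Measurable R₁ ∧ Measurable R₂ ∧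
        (∀ ω, R₁ ω ∈ Set.Icc (0 : ℝ) 1) ∧ (∀ ω, R₂ ω ∈ Set.Icc (0 : ℝ) 1) ∧
        0 < ∫ ω, min (R₁ ω) (R₂ ω) ∂μ ∧
        ∀ d : ℝ → ℝ, (∀ r, d r ∈ Set.Icc (0 : ℝ) 1) →
          α * ∫ ω, min (R₁ ω) (R₂ ω) ∂μ <
            ∫ ω, (d (R₁ ω) * R₁ ω + (1 - d (R₁ ω)) * R₂ ω) ∂μ := by
  have hα0 : (0 : ℝ) < α := lt_of_lt_of_le one_pos hα
  -- the small parameter ε = 1/(2α) ∈ (0, 1/2]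
  set ε : ℝ := 1 / (2 * α) with hε_def
  have hε_pos : 0 < ε := by positivity
  have hαε : α * ε = 1 / 2 := by rw [hε_def]; field_simp
  have hε_half : ε ≤ 1 / 2 := by
    rw [hε_def]
    rw [div_le_div_iff₀ (by positivity) (by norm_num)]
    linarith
  have hε1 : ε ≤ 1 := by linarith
  have h1ε : 0 ≤ 1 - ε := by linarith
  refine ⟨Bool, ⊤, inferInstance,
    ENNReal.ofReal ε • Measure.dirac true + ENNReal.ofReal (1 - ε) • Measure.dirac false,
    ?_, (fun _ => ε), (fun b => if b then 1 else 0), measurable_const,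
    measurable_of_finite _, fun ω => ⟨le_of_lt hε_pos, hε1⟩,
    fun ω => by by_cases h : ω <;> simp [h], ?_, ?_⟩
  · constructor
    simp only [Measure.add_apply, Measure.smul_apply, Measure.dirac_apply, smul_eq_mul,
      Set.mem_univ, Set.indicator_univ, Pi.one_apply, mul_one]
    rw [← ENNReal.ofReal_add (le_of_lt hε_pos) h1ε]
    norm_num
  · rw [integral_bool_two_point ε (1 - ε) (le_of_lt hε_pos) h1ε]
    norm_num [min_eq_left hε1]
    positivity
  · intro d hd
    rw [integral_bool_two_point ε (1 - ε) (le_of_lt hε_pos) h1ε,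
      integral_bool_two_point ε (1 - ε) (le_of_lt hε_pos) h1ε]
    norm_num [min_eq_left hε1]
    rw [min_eq_right (le_of_lt hε_pos)]
    have expand : ε * (d ε * ε + (1 - d ε)) + (1 - ε) * (d ε * ε) = ε := by ring
    rw [expand, mul_zero, add_zero, ← mul_assoc, hαε]
    linarith
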